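/- arXiv:1401.3723 — 6 statements merged into one kernel-verified Lean document; each statement's English description precedes it below -/
import Mathlib

section
/- Let (X,𝒳), (Y,𝒴), (Z,𝒵) be measurable spaces with X a finite set and 𝒳 its power set, and let q, r be probability measures on (X,𝒳)⊗(Z,𝒵) and (Y,𝒴)⊗(Z,𝒵) with the same marginal on Z. Then the fiber product q⊗_Z r exists. -/
open MeasureTheory Set

/-- The conditional probability `p[S‖m]` of an event `S` given a sub-σ-algebra `m`:
the conditional expectation, with respect to `p`, of the indicator function of `S` given `m`. -/
noncomputable def condProb {α : Type*} [MeasurableSpace α]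
    (p : Measure α) (m : MeasurableSpace α) (S : Set α) : α → ℝ :=
  MeasureTheory.condExp m p (S.indicator fun _ => (1 : ℝ))

/-- `f : Z → ℝ` is a (measurable) version of the conditional probability, with respect to `p`,
of the event `S` given the coordinate projection `π : α → Z`. -/
def IsCondVersion {α Z : Type*} [MeasurableSpace α] [MeasurableSpace Z]
    (p : Measure α) (π : α → Z) (S : Set α) (f : Z → ℝ) : Prop :=
  Measurable f ∧
    (fun a => f (π a)) =ᵐ[p] condProb p (MeasurableSpace.comap π inferInstance) S

/-- `p` is the fiber product `q ⊗_Z r` of `q` and `r` over `Z`:  for all measurable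
`J ⊆ X`, `K ⊆ Y`, `L ⊆ Z`, `p (J ×ˢ K ×ˢ L) = ∫_L q[J‖𝒵]_z * r[K‖𝒵]_z ds(z)`, where `s` is
the common marginal of `q` and `r` on `Z` and `q[J‖𝒵]`, `r[K‖𝒵]` stand for (any measurable
versions of) the conditional probabilities of `J`, `K` given the `Z`-coordinate. -/
def IsFiberProduct {X Y Z : Type*}
    [MeasurableSpace X] [MeasurableSpace Y] [MeasurableSpace Z]
    (q : Measure (X × Z)) (r : Measure (Y × Z)) (p : Measure (X × Y × Z)) : Prop :=
  ∀ (J : Set X) (K : Set Y) (L : Set Z),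
    MeasurableSet J → MeasurableSet K → MeasurableSet L →
    ∀ f g : Z → ℝ,
      IsCondVersion q (Prod.snd : X × Z → Z) (J ×ˢ (univ : Set Z)) f →
      IsCondVersion r (Prod.snd : Y × Z → Z) (K ×ˢ (univ : Set Z)) g →
      (p (J ×ˢ K ×ˢ L)).toReal = ∫ z in L, f z * g z ∂(q.map (Prod.snd : X × Z → Z))

/-! A finite discrete space is standard Borel, so `q`, read as a measure on `Z × X`,
disintegrates as `s ⊗ κ` for a Markov kernel `κ` from `Z` to `X`, and `z ↦ κ z J` is a version
of `q[J‖𝒵]`. Let `p` draw `(y, z)` from `r` and then `x` from `κ z`. Then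
`p (J × K × L) = ∫_{K × L} κ z J dr = ∫_L κ z J · r[K‖𝒵]_z ds`, the second equality because
the bounded `𝒵`-measurable factor `κ · J` can be pulled out of the conditional expectation. -/

open ProbabilityTheory

lemma setIntegral_mul_condExp {Ω : Type*} {m mΩ : MeasurableSpace Ω} {μ : Measure Ω}
    [IsFiniteMeasure μ] (hm : m ≤ mΩ) {f g : Ω → ℝ} (hf : StronglyMeasurable[m] f) {C : ℝ}
    (hC : ∀ ω, ‖f ω‖ ≤ C) (hg : Integrable g μ) {s : Set Ω} (hs : MeasurableSet[m] s) :
    ∫ ω in s, f ω * μ[g|m] ω ∂μ = ∫ ω in s, f ω * g ω ∂μ := by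
  calc ∫ ω in s, f ω * μ[g|m] ω ∂μ = ∫ ω in s, μ[f * g|m] ω ∂μ :=
        setIntegral_congr_ae (hm s hs) <| by
          filter_upwards [condExp_stronglyMeasurable_mul_of_bound hm hf hg C (.of_forall hC)]
            with ω hω _ using hω.symm
    _ = ∫ ω in s, f ω * g ω ∂μ :=
        setIntegral_condExp hm (hg.bdd_mul (hf.mono hm).aestronglyMeasurable (.of_forall hC)) hs

namespace IsCondVersion

variable {W Z : Type*} [MeasurableSpace W] [MeasurableSpace Z] {μ : Measure (W × Z)}
  {f : Z → ℝ}

lemma integrable_map_snd {S : Set (W × Z)} (hf : IsCondVersion μ Prod.snd S f) :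
    Integrable f (μ.map Prod.snd) := by
  rw [integrable_map_measure hf.1.aestronglyMeasurable measurable_snd.aemeasurable]
  exact integrable_condExp.congr hf.2.symm

variable [IsFiniteMeasure μ]

lemma setIntegral_mul_eq {S : Set W} (hS : MeasurableSet S)
    (hf : IsCondVersion μ Prod.snd (S ×ˢ univ) f) {h : Z → ℝ} (hh : Measurable h) {C : ℝ}
    (hC : ∀ z, ‖h z‖ ≤ C) {L : Set Z} (hL : MeasurableSet L) :
    ∫ z in L, h z * f z ∂(μ.map Prod.snd) = ∫ w in S ×ˢ L, h w.2 ∂μ := by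
  calc ∫ z in L, h z * f z ∂(μ.map Prod.snd)
      = ∫ w in Prod.snd ⁻¹' L, h w.2 * f w.2 ∂μ :=
        setIntegral_map hL (hh.mul hf.1).aestronglyMeasurable measurable_snd.aemeasurable
    _ = ∫ w in Prod.snd ⁻¹' L,
          h w.2 * condProb μ (.comap Prod.snd ‹_›) (S ×ˢ univ) w ∂μ :=
        setIntegral_congr_ae (measurable_snd hL) <| by
          filter_upwards [hf.2] with w hw _
          rw [hw]
    _ = ∫ w in Prod.snd ⁻¹' L, h w.2 * (S ×ˢ univ).indicator (fun _ => 1) w ∂μ :=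
        setIntegral_mul_condExp measurable_snd.comap_le
          (hh.comp (Measurable.of_comap_le le_rfl)).stronglyMeasurable (fun w => hC w.2)
          ((integrable_const 1).indicator (hS.prod .univ)) ⟨L, hL, rfl⟩
    _ = ∫ w in S ×ˢ L, h w.2 ∂μ := by
        simp_rw [← indicator_mul_right (S ×ˢ univ) (fun w : W × Z => h w.2), mul_one]
        rw [setIntegral_indicator (hS.prod .univ)]
        congr 2
        ext ⟨a, b⟩
        simp [and_comm]

lemma setIntegral_eq {S : Set W} (hS : MeasurableSet S)
    (hf : IsCondVersion μ Prod.snd (S ×ˢ univ) f) {L : Set Z} (hL : MeasurableSet L) :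
    ∫ z in L, f z ∂(μ.map Prod.snd) = μ.real (S ×ˢ L) := by
  simpa using hf.setIntegral_mul_eq hS (h := fun _ => 1) measurable_const (C := 1) (by simp) hL

end IsCondVersion

lemma norm_measureReal_le_one {α : Type*} [MeasurableSpace α] (μ : Measure α)
    [IsProbabilityMeasure μ] (s : Set α) : ‖μ.real s‖ ≤ 1 := by
  rw [Real.norm_of_nonneg measureReal_nonneg]
  exact measureReal_le_one

section CondKernel

variable {X Y Z : Type*} [MeasurableSpace X] [StandardBorelSpace X] [Nonempty X]
  [MeasurableSpace Y] [MeasurableSpace Z] (q : Measure (X × Z)) [IsFiniteMeasure q]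

lemma setIntegral_condKernel_map_swap {J : Set X} (hJ : MeasurableSet J) {L : Set Z}
    (hL : MeasurableSet L) :
    ∫ z in L, ((q.map Prod.swap).condKernel z).real J ∂(q.map Prod.snd) =
      q.real (J ×ˢ L) := by
  have hκ : Measurable fun z => (q.map Prod.swap).condKernel z J :=
    (q.map Prod.swap).condKernel.measurable_coe hJ
  simp only [measureReal_def]
  rw [integral_toReal hκ.aemeasurable (.of_forall fun _ => measure_lt_top _ _),
    ← Measure.compProd_apply_prod hL hJ, ← Measure.snd, ← Measure.fst_map_swap,
    Measure.disintegrate, Measure.map_apply measurable_swap (hL.prod hJ), preimage_swap_prod]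

lemma IsCondVersion.ae_eq_condKernel_map_swap {J : Set X} (hJ : MeasurableSet J) {f : Z → ℝ}
    (hf : IsCondVersion q Prod.snd (J ×ˢ univ) f) :
    f =ᵐ[q.map Prod.snd] fun z => ((q.map Prod.swap).condKernel z).real J := by
  have hκ : Integrable (fun z => ((q.map Prod.swap).condKernel z).real J) (q.map Prod.snd) :=
    .of_bound ((q.map Prod.swap).condKernel.measurable_coe hJ).ennreal_toReal.aestronglyMeasurable
      1 (.of_forall fun _ => norm_measureReal_le_one _ J)
  refine ae_eq_of_forall_setIntegral_eq_of_sigmaFinite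
    (fun _ _ _ => hf.integrable_map_snd.integrableOn) (fun _ _ _ => hκ.integrableOn)
    fun L hL _ => ?_
  rw [hf.setIntegral_eq hJ hL, setIntegral_condKernel_map_swap q hJ hL]

noncomputable def fiberProduct (r : Measure (Y × Z)) : Measure (X × Y × Z) :=
  (r ⊗ₘ Kernel.prodMkLeft Y (q.map Prod.swap).condKernel).map Prod.swap

lemma fiberProduct_apply_prod (r : Measure (Y × Z)) [IsFiniteMeasure r] {J : Set X}
    {K : Set Y} {L : Set Z} (hJ : MeasurableSet J) (hK : MeasurableSet K) (hL : MeasurableSet L) :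
    fiberProduct q r (J ×ˢ K ×ˢ L) =
      ∫⁻ w in K ×ˢ L, (q.map Prod.swap).condKernel w.2 J ∂r := by
  rw [fiberProduct, Measure.map_apply measurable_swap (hJ.prod (hK.prod hL)), preimage_swap_prod,
    Measure.compProd_apply_prod (hK.prod hL) hJ]
  rfl

instance (r : Measure (Y × Z)) [IsProbabilityMeasure r] :
    IsProbabilityMeasure (fiberProduct q r) :=
  Measure.isProbabilityMeasure_map measurable_swap.aemeasurable

theorem isFiberProduct_fiberProduct (r : Measure (Y × Z)) [IsFiniteMeasure r]
    (hs : q.map Prod.snd = r.map Prod.snd) : IsFiberProduct q r (fiberProduct q r) := by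
  intro J K L hJ hK hL f g hf hg
  set κ := (q.map Prod.swap).condKernel
  have hκ : Measurable fun z => (κ z).real J := (κ.measurable_coe hJ).ennreal_toReal
  calc (fiberProduct q r (J ×ˢ K ×ˢ L)).toReal
      = ∫ w in K ×ˢ L, (κ w.2).real J ∂r := by
        rw [fiberProduct_apply_prod q r hJ hK hL]
        exact (integral_toReal ((κ.measurable_coe hJ).comp measurable_snd).aemeasurable
          (.of_forall fun _ => measure_lt_top _ _)).symm
    _ = ∫ z in L, (κ z).real J * g z ∂(r.map Prod.snd) :=
        (hg.setIntegral_mul_eq hK hκ (fun z => norm_measureReal_le_one (κ z) J) hL).symm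
    _ = ∫ z in L, f z * g z ∂(q.map Prod.snd) := by
        rw [← hs]
        refine setIntegral_congr_ae hL ?_
        filter_upwards [hf.ae_eq_condKernel_map_swap q hJ] with z hz _
        rw [hz]

end CondKernel

/-- **Corollary.**  Let `q`, `r` be probability measures on `X × Z`, `Y × Z` with the same
marginal on `Z`, where `X` is a finite set equipped with its power-set σ-algebra.  Then the
fiber product `q ⊗_Z r` exists. -/
theorem fiberProduct_exists_of_finite {X Y Z : Type*}
    [MeasurableSpace X] [Finite X] [DiscreteMeasurableSpace X]
    [MeasurableSpace Y] [MeasurableSpace Z]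
    (q : Measure (X × Z)) (r : Measure (Y × Z))
    [IsProbabilityMeasure q] [IsProbabilityMeasure r]
    (hs : q.map (Prod.snd : X × Z → Z) = r.map (Prod.snd : Y × Z → Z)) :
    ∃ p : Measure (X × Y × Z), IsProbabilityMeasure p ∧ IsFiberProduct q r p := by
  have : Nonempty X := (nonempty_prod.mp (nonempty_of_isProbabilityMeasure q)).1
  exact ⟨fiberProduct q r, inferInstance, isFiberProduct_fiberProduct q r hs⟩
end

section
/- Let p be an h.v. model, and let p_a, p_b, q_a, q_b, r be the marginals of p on X_a×Y×Λ, X_b×Y×Λ, X_a×Y_a×Λ, X_b×Y_b×Λ, and Y×Λ respectively. Then p satisfies parameter independence if and only if p_a = q_a ⊗_{Y_a×Λ} r and p_b = q_b ⊗_{Y_b×Λ} r (fiber products over Y_a×Λ and Y_b×Λ respectively). -/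
open MeasureTheory Set

section HiddenVariable

/- Outcome spaces `Xa`, `Xb` are finite with the power-set σ-algebra; measurement spaces
`Ya`, `Yb` and the hidden-variable space `Λ` are arbitrary measurable spaces.  A hidden-variable
model is a (probability) measure on `(Xa × Xb) × (Ya × Yb) × Λ`; an empirical model is a
(probability) measure on `(Xa × Xb) × (Ya × Yb)`. -/
variable {Xa Xb Ya Yb : Type*} {Λ : Type*}
  [Fintype Xa] [MeasurableSpace Xa] [DiscreteMeasurableSpace Xa]
  [Fintype Xb] [MeasurableSpace Xb] [DiscreteMeasurableSpace Xb]
  [MeasurableSpace Ya] [MeasurableSpace Yb] [MeasurableSpace Λ]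

/-- The sub-σ-algebra `𝒴 ⊗ ℒ` of events depending on the measurements and the hidden variable. -/
def mYL : MeasurableSpace ((Xa × Xb) × (Ya × Yb) × Λ) :=
  MeasurableSpace.comap (fun ω => ω.2) inferInstance

/-- The sub-σ-algebra `𝒴a ⊗ ℒ` of events depending on Alice's measurement and the hidden
variable. -/
def mYaL : MeasurableSpace ((Xa × Xb) × (Ya × Yb) × Λ) :=
  MeasurableSpace.comap (fun ω => (ω.2.1.1, ω.2.2)) inferInstance

/-- The sub-σ-algebra `𝒴b ⊗ ℒ` of events depending on Bob's measurement and the hidden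
variable. -/
def mYbL : MeasurableSpace ((Xa × Xb) × (Ya × Yb) × Λ) :=
  MeasurableSpace.comap (fun ω => (ω.2.1.2, ω.2.2)) inferInstance

/-- The sub-σ-algebra `𝒴` of events depending on the measurements only. -/
def mY : MeasurableSpace ((Xa × Xb) × (Ya × Yb) × Λ) :=
  MeasurableSpace.comap (fun ω => ω.2.1) inferInstance

/-- **Locality**: `p[x‖𝒴⊗ℒ] = p[x_a‖𝒴a⊗ℒ] ⬝ p[x_b‖𝒴b⊗ℒ]` a.s., for every outcome `x`. -/
def Locality (p : Measure ((Xa × Xb) × (Ya × Yb) × Λ)) : Prop :=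
  ∀ x : Xa × Xb,
    condProb p mYL {ω | ω.1 = x} =ᵐ[p]
      fun ω => condProb p mYaL {ω' | ω'.1.1 = x.1} ω * condProb p mYbL {ω' | ω'.1.2 = x.2} ω

/-- **Parameter independence**: `p[x_a‖𝒴⊗ℒ] = p[x_a‖𝒴a⊗ℒ]` a.s. for every `x_a`, and likewise
with `a` and `b` interchanged. -/
def ParameterIndependence (p : Measure ((Xa × Xb) × (Ya × Yb) × Λ)) : Prop :=
  (∀ xa : Xa, condProb p mYL {ω | ω.1.1 = xa} =ᵐ[p] condProb p mYaL {ω | ω.1.1 = xa}) ∧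
  (∀ xb : Xb, condProb p mYL {ω | ω.1.2 = xb} =ᵐ[p] condProb p mYbL {ω | ω.1.2 = xb})

/-- **Outcome independence**: `p[x‖𝒴⊗ℒ] = p[x_a‖𝒴⊗ℒ] ⬝ p[x_b‖𝒴⊗ℒ]` a.s., for every
outcome `x`. -/
def OutcomeIndependence (p : Measure ((Xa × Xb) × (Ya × Yb) × Λ)) : Prop :=
  ∀ x : Xa × Xb,
    condProb p mYL {ω | ω.1 = x} =ᵐ[p]
      fun ω => condProb p mYL {ω' | ω'.1.1 = x.1} ω * condProb p mYL {ω' | ω'.1.2 = x.2} ω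

/-- **λ-independence**: `p[L‖𝒴] = p(L)` a.s., for every event `L` of the hidden-variable
space. -/
def LambdaIndependence (p : Measure ((Xa × Xb) × (Ya × Yb) × Λ)) : Prop :=
  ∀ L : Set Λ, MeasurableSet L →
    condProb p mY {ω | ω.2.2 ∈ L} =ᵐ[p] fun _ => (p {ω | ω.2.2 ∈ L}).toReal

/-- **Weak determinism**: `p[x‖𝒴⊗ℒ] ∈ {0,1}` a.s., for every outcome `x`. -/
def WeakDeterminism (p : Measure ((Xa × Xb) × (Ya × Yb) × Λ)) : Prop :=
  ∀ x : Xa × Xb, ∀ᵐ ω ∂p, condProb p mYL {ω' | ω'.1 = x} ω ∈ ({0, 1} : Set ℝ)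

/-- **Strong determinism**: `p[x_a‖𝒴a⊗ℒ] ∈ {0,1}` a.s. for every `x_a`, and likewise with `a`
and `b` interchanged. -/
def StrongDeterminism (p : Measure ((Xa × Xb) × (Ya × Yb) × Λ)) : Prop :=
  (∀ xa : Xa, ∀ᵐ ω ∂p, condProb p mYaL {ω' | ω'.1.1 = xa} ω ∈ ({0, 1} : Set ℝ)) ∧
  (∀ xb : Xb, ∀ᵐ ω ∂p, condProb p mYbL {ω' | ω'.1.2 = xb} ω ∈ ({0, 1} : Set ℝ))

end HiddenVariable

section FiberProducts

variable {Xa Xb Ya Yb : Type*} {Λ : Type*}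
  [Fintype Xa] [MeasurableSpace Xa] [DiscreteMeasurableSpace Xa]
  [Fintype Xb] [MeasurableSpace Xb] [DiscreteMeasurableSpace Xb]
  [MeasurableSpace Ya] [MeasurableSpace Yb] [MeasurableSpace Λ]

/-- `p = p_a ⊗_{Y×Λ} p_b`: the h.v. model `p` is the fiber product over `Y × Λ` of its marginals
`p_a` on `Xa × Y × Λ` and `p_b` on `Xb × Y × Λ`, i.e. for all `J ⊆ Xa`, `K ⊆ Xb` and measurable
`M ⊆ Y × Λ`, `p (J × K × M) = ∫_M p_a[J‖𝒴⊗ℒ] ⬝ p_b[K‖𝒴⊗ℒ] dr`, where `r` is the marginal of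
`p` on `Y × Λ` and the integrand uses any measurable versions of the conditional
probabilities. -/
def OutcomeFiber (p : Measure ((Xa × Xb) × (Ya × Yb) × Λ)) : Prop :=
  ∀ (J : Set Xa) (K : Set Xb) (M : Set ((Ya × Yb) × Λ)),
    MeasurableSet J → MeasurableSet K → MeasurableSet M →
    ∀ f g : (Ya × Yb) × Λ → ℝ,
      IsCondVersion (p.map fun ω => (ω.1.1, ω.2))
        (Prod.snd : Xa × ((Ya × Yb) × Λ) → (Ya × Yb) × Λ) {v | v.1 ∈ J} f →
      IsCondVersion (p.map fun ω => (ω.1.2, ω.2))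
        (Prod.snd : Xb × ((Ya × Yb) × Λ) → (Ya × Yb) × Λ) {v | v.1 ∈ K} g →
      (p {ω | ω.1.1 ∈ J ∧ ω.1.2 ∈ K ∧ ω.2 ∈ M}).toReal
        = ∫ w in M, f w * g w ∂(p.map fun ω => ω.2)

/-- `p_a = q_a ⊗_{Ya×Λ} r`: the marginal `p_a` of the h.v. model `p` on `Xa × Y × Λ` is the
fiber product over `Ya × Λ` of the marginals `q_a` (on `Xa × Ya × Λ`) and `r` (on `Y × Λ`),
i.e. for all `J ⊆ Xa`, measurable `K ⊆ Yb` and measurable `L ⊆ Ya × Λ`,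
`p_a (J × K × L) = ∫_L q_a[J‖𝒴a⊗ℒ] ⬝ r[K‖𝒴a⊗ℒ] ds`, where `s` is the marginal of `p` on
`Ya × Λ` and the integrand uses any measurable versions of the conditional probabilities. -/
def ParamFiberA (p : Measure ((Xa × Xb) × (Ya × Yb) × Λ)) : Prop :=
  ∀ (J : Set Xa) (K : Set Yb) (L : Set (Ya × Λ)),
    MeasurableSet J → MeasurableSet K → MeasurableSet L →
    ∀ f g : Ya × Λ → ℝ,
      IsCondVersion (p.map fun ω => (ω.1.1, (ω.2.1.1, ω.2.2)))
        (Prod.snd : Xa × (Ya × Λ) → Ya × Λ) {v | v.1 ∈ J} f →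
      IsCondVersion (p.map fun ω => ω.2)
        (fun w : (Ya × Yb) × Λ => (w.1.1, w.2)) {w | w.1.2 ∈ K} g →
      ((p.map fun ω => (ω.1.1, ω.2))
          {v : Xa × ((Ya × Yb) × Λ) | v.1 ∈ J ∧ v.2.1.2 ∈ K ∧ (v.2.1.1, v.2.2) ∈ L}).toReal
        = ∫ z in L, f z * g z ∂(p.map fun ω => (ω.2.1.1, ω.2.2))

/-- `p_b = q_b ⊗_{Yb×Λ} r`: the statement symmetric to `ParamFiberA`, with the roles of `a`
and `b` interchanged. -/
def ParamFiberB (p : Measure ((Xa × Xb) × (Ya × Yb) × Λ)) : Prop :=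
  ∀ (J : Set Xb) (K : Set Ya) (L : Set (Yb × Λ)),
    MeasurableSet J → MeasurableSet K → MeasurableSet L →
    ∀ f g : Yb × Λ → ℝ,
      IsCondVersion (p.map fun ω => (ω.1.2, (ω.2.1.2, ω.2.2)))
        (Prod.snd : Xb × (Yb × Λ) → Yb × Λ) {v | v.1 ∈ J} f →
      IsCondVersion (p.map fun ω => ω.2)
        (fun w : (Ya × Yb) × Λ => (w.1.2, w.2)) {w | w.1.1 ∈ K} g →
      ((p.map fun ω => (ω.1.2, ω.2))
          {v : Xb × ((Ya × Yb) × Λ) | v.1 ∈ J ∧ v.2.1.1 ∈ K ∧ (v.2.1.2, v.2.2) ∈ L}).toReal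
        = ∫ z in L, f z * g z ∂(p.map fun ω => (ω.2.1.2, ω.2.2))

end FiberProducts

/-!
Write `ρ = (y_a, λ)`. Since `q_a[J‖ρ]` is a function of `ρ`, the pull-out
property of conditional expectations gives
`∫_{ρ ∈ L} q_a[J‖ρ] ⬝ r[K‖ρ] = ∫_{ρ ∈ L, y_b ∈ K} p[J‖𝒴a⊗ℒ]`, so the fiber product identity for
all `K` and `L` says that `p[J‖𝒴a⊗ℒ]` and the indicator of `J` have the same integral over every
set `{ρ ∈ L, y_b ∈ K}`. These sets form a π-system generating `𝒴⊗ℒ`, so by Dynkin's theorem this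
holds iff `p[J‖𝒴a⊗ℒ]` is also a version of `p[J‖𝒴⊗ℒ]`. Finally, since `Xa` is finite, parameter
independence for the singletons `{x_a}` extends to every `J ⊆ Xa` by additivity.
-/

section ConditionalExpectation

variable {α : Type*} {m m₁ m₂ m0 : MeasurableSpace α} {μ : Measure α}

theorem setIntegral_indicator_one {A : Set α} (hA : MeasurableSet A) (s : Set α) :
    ∫ x in s, A.indicator (fun _ => (1 : ℝ)) x ∂μ = μ.real (A ∩ s) := by
  rw [integral_indicator hA, setIntegral_const, smul_eq_mul, mul_one, measureReal_restrict_apply hA]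

theorem setIntegral_eq_of_isPiSystem {E : Type*} [NormedAddCommGroup E] [NormedSpace ℝ E]
    {C : Set (Set α)} {f g : α → E} (hm : m ≤ m0) (hC : m = MeasurableSpace.generateFrom C)
    (hCpi : IsPiSystem C) (hf : Integrable f μ) (hg : Integrable g μ)
    (h_univ : ∫ x, f x ∂μ = ∫ x, g x ∂μ) (h_basic : ∀ s ∈ C, ∫ x in s, f x ∂μ = ∫ x in s, g x ∂μ)
    {s : Set α} (hs : MeasurableSet[m] s) : ∫ x in s, f x ∂μ = ∫ x in s, g x ∂μ := by
  induction s, hs using MeasurableSpace.induction_on_inter hC hCpi with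
  | empty => simp
  | basic t ht => exact h_basic t ht
  | compl t ht iht =>
    rw [setIntegral_compl (hm t ht) hf, setIntegral_compl (hm t ht) hg, iht, h_univ]
  | iUnion t htd htm iht =>
    rw [integral_iUnion (fun i => hm _ (htm i)) htd hf.integrableOn,
      integral_iUnion (fun i => hm _ (htm i)) htd hg.integrableOn]
    exact tsum_congr iht

theorem condExp_ae_eq_condExp_iff_of_isPiSystem {E : Type*} [NormedAddCommGroup E]
    [NormedSpace ℝ E] [CompleteSpace E] [IsFiniteMeasure μ] {C : Set (Set α)} {F : α → E}
    (hm₁₂ : m₁ ≤ m₂) (hm₂ : m₂ ≤ m0) (hC : m₂ = MeasurableSpace.generateFrom C)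
    (hCpi : IsPiSystem C) (hF : Integrable F μ) :
    μ[F | m₂] =ᵐ[μ] μ[F | m₁] ↔ ∀ s ∈ C, ∫ x in s, μ[F | m₁] x ∂μ = ∫ x in s, F x ∂μ := by
  have hC_meas : ∀ s ∈ C, MeasurableSet[m₂] s := fun s hs =>
    hC ▸ MeasurableSpace.measurableSet_generateFrom hs
  refine ⟨fun h s hs => ?_, fun h => ?_⟩
  · rw [← setIntegral_condExp hm₂ hF (hC_meas s hs)]
    exact setIntegral_congr_ae (hm₂ _ (hC_meas s hs)) (h.mono fun x hx _ => hx.symm)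
  · refine (ae_eq_condExp_of_forall_setIntegral_eq hm₂ hF
      (fun s _ _ => integrable_condExp.integrableOn) (fun s hs _ => ?_)
      (stronglyMeasurable_condExp.mono hm₁₂).aestronglyMeasurable).symm
    exact setIntegral_eq_of_isPiSystem hm₂ hC hCpi integrable_condExp hF
      (integral_condExp (hm₁₂.trans hm₂)) h hs

theorem setIntegral_mul_condProb [IsFiniteMeasure μ] {F : α → ℝ} {B s : Set α} (hm : m ≤ m0)
    (hF : StronglyMeasurable[m] F) (hFi : Integrable F μ) (hB : MeasurableSet B)
    (hs : MeasurableSet[m] s) :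
    ∫ x in s, F x * condProb μ m B x ∂μ = ∫ x in s ∩ B, F x ∂μ := by
  have hB_int : Integrable (B.indicator fun _ => (1 : ℝ)) μ := (integrable_const 1).indicator hB
  have hFB : F * B.indicator (fun _ => 1) = B.indicator F := by
    ext x; by_cases hx : x ∈ B <;> simp [hx]
  have hFB_int : Integrable (F * B.indicator fun _ => 1) μ := hFB ▸ hFi.indicator hB
  calc ∫ x in s, F x * condProb μ m B x ∂μ
      = ∫ x in s, μ[F * B.indicator (fun _ => 1) | m] x ∂μ :=
        setIntegral_congr_ae (hm s hs) <|
          (condExp_mul_of_stronglyMeasurable_left hF hFB_int hB_int).mono fun x hx _ => hx.symm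
    _ = ∫ x in s, B.indicator F x ∂μ := by rw [setIntegral_condExp hm hFB_int hs, hFB]
    _ = ∫ x in s ∩ B, F x ∂μ := setIntegral_indicator hB

theorem condProb_preimage_ae_eq_sum [IsFiniteMeasure μ] {X : Type*} [MeasurableSpace X]
    [MeasurableSingletonClass X] {ξ : α → X} (hξ : Measurable ξ) {J : Set X} (hJ : J.Finite) :
    condProb μ m (ξ ⁻¹' J) =ᵐ[μ] ∑ x ∈ hJ.toFinset, condProb μ m (ξ ⁻¹' {x}) := by
  have h_sum : (ξ ⁻¹' J).indicator (fun _ => (1 : ℝ))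
      = ∑ x ∈ hJ.toFinset, (ξ ⁻¹' {x}).indicator fun _ => 1 := by
    ext ω
    classical
    simp [Set.indicator_apply]
  unfold condProb
  rw [h_sum]
  exact condExp_finsetSum
    (fun x _ => (integrable_const 1).indicator (hξ (measurableSet_singleton x))) m

theorem condProb_preimage_ae_eq_of_forall_singleton [IsFiniteMeasure μ] {X : Type*} [Finite X]
    [MeasurableSpace X] [MeasurableSingletonClass X] {ξ : α → X} (hξ : Measurable ξ)
    (h : ∀ x, condProb μ m₁ (ξ ⁻¹' {x}) =ᵐ[μ] condProb μ m₂ (ξ ⁻¹' {x})) (J : Set X) :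
    condProb μ m₁ (ξ ⁻¹' J) =ᵐ[μ] condProb μ m₂ (ξ ⁻¹' J) := by
  refine (condProb_preimage_ae_eq_sum hξ J.toFinite).trans
    (Filter.EventuallyEq.trans ?_ (condProb_preimage_ae_eq_sum hξ J.toFinite).symm)
  filter_upwards [ae_all_iff.2 h] with ω hω
  simp only [Finset.sum_apply, hω]

end ConditionalExpectation

section CondVersion

variable {α β Z : Type*} [MeasurableSpace α] [MeasurableSpace β] [MeasurableSpace Z]
  {μ : Measure α} {π : α → Z} {S : Set α} {f : Z → ℝ}

theorem exists_isCondVersion (μ : Measure α) (π : α → Z) (S : Set α) :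
    ∃ f, IsCondVersion μ π S f := by
  obtain ⟨f, hf, hf_eq⟩ :=
    (stronglyMeasurable_condExp (m := MeasurableSpace.comap π inferInstance) (μ := μ)
      (f := S.indicator fun _ => (1 : ℝ))).exists_eq_measurable_comp
  exact ⟨f, hf.measurable, .of_forall fun a => (congrFun hf_eq a).symm⟩

theorem isCondVersion_iff [IsFiniteMeasure μ] (hπ : Measurable π) (hS : MeasurableSet S) :
    IsCondVersion μ π S f ↔ Measurable f ∧ Integrable (fun a => f (π a)) μ ∧
      ∀ B, MeasurableSet B → ∫ a in π ⁻¹' B, f (π a) ∂μ = μ.real (S ∩ π ⁻¹' B) := by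
  have hS_int : Integrable (S.indicator fun _ => (1 : ℝ)) μ := (integrable_const 1).indicator hS
  refine ⟨fun ⟨hf, h_ae⟩ => ⟨hf, integrable_condExp.congr h_ae.symm, fun B hB => ?_⟩,
    fun ⟨hf, hfi, h⟩ => ⟨hf, ?_⟩⟩
  · rw [← setIntegral_indicator_one hS, ← setIntegral_condExp hπ.comap_le hS_int ⟨B, hB, rfl⟩]
    exact setIntegral_congr_ae (hπ hB) (h_ae.mono fun a ha _ => ha)
  · refine ae_eq_condExp_of_forall_setIntegral_eq hπ.comap_le hS_int (fun _ _ _ => hfi.integrableOn)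
      ?_ (hf.comp (comap_measurable π)).aestronglyMeasurable
    rintro _ ⟨B, hB, rfl⟩ _
    rw [h B hB, setIntegral_indicator_one hS]

theorem isCondVersion_map_iff [IsFiniteMeasure μ] {T : α → β} {π : β → Z} {S : Set β}
    (hT : Measurable T) (hπ : Measurable π) (hS : MeasurableSet S) :
    IsCondVersion (μ.map T) π S f ↔ IsCondVersion μ (fun a => π (T a)) (T ⁻¹' S) f := by
  rw [isCondVersion_iff hπ hS, isCondVersion_iff (π := fun a => π (T a)) (hπ.comp hT) (hT hS)]
  refine and_congr_right fun hf => and_congr ?_ (forall₂_congr fun B hB => ?_)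
  · exact integrable_map_measure (hf.comp hπ).aestronglyMeasurable hT.aemeasurable
  · rw [setIntegral_map (f := fun b => f (π b)) (hπ hB) (hf.comp hπ).aestronglyMeasurable
      hT.aemeasurable, map_measureReal_apply hT (hS.inter (hπ hB))]
    rfl

theorem IsCondVersion.setIntegral_mul [IsFiniteMeasure μ] {B : Set α} {L : Set Z} {g : Z → ℝ}
    (hπ : Measurable π) (hf : IsCondVersion μ π S f) (hg : IsCondVersion μ π B g)
    (hB : MeasurableSet B) (hL : MeasurableSet L) :
    ∫ a in π ⁻¹' L, f (π a) * g (π a) ∂μ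
      = ∫ a in π ⁻¹' L ∩ B, condProb μ (MeasurableSpace.comap π inferInstance) S a ∂μ := by
  have hfi : Integrable (fun a => f (π a)) μ := integrable_condExp.congr hf.2.symm
  calc ∫ a in π ⁻¹' L, f (π a) * g (π a) ∂μ
      = ∫ a in π ⁻¹' L, f (π a) * condProb μ (MeasurableSpace.comap π inferInstance) B a ∂μ :=
        setIntegral_congr_ae (hπ hL) (hg.2.mono fun a ha _ => congrArg (f (π a) * ·) ha)
    _ = ∫ a in π ⁻¹' L ∩ B, f (π a) ∂μ :=
        setIntegral_mul_condProb hπ.comap_le (hf.1.comp (comap_measurable π)).stronglyMeasurable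
          hfi hB ⟨L, hL, rfl⟩
    _ = ∫ a in π ⁻¹' L ∩ B, condProb μ (MeasurableSpace.comap π inferInstance) S a ∂μ :=
        setIntegral_congr_ae ((hπ hL).inter hB) (hf.2.mono fun a ha _ => ha)

end CondVersion

section FiberProduct

variable {Ω W Z V : Type*} [MeasurableSpace Ω] [MeasurableSpace W] [MeasurableSpace Z]
  [MeasurableSpace V] {μ : Measure Ω} [IsFiniteMeasure μ] {π : Ω → W} {σ : W → Z} {b : W → V}

theorem condProb_comap_ae_eq_iff_forall_fiber (hπ : Measurable π)
    (hσb : MeasurableSpace.comap σ inferInstance ⊔ MeasurableSpace.comap b inferInstance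
      = ‹MeasurableSpace W›) {A : Set Ω} (hA : MeasurableSet A) :
    condProb μ (MeasurableSpace.comap π inferInstance) A
        =ᵐ[μ] condProb μ (MeasurableSpace.comap (fun ω => σ (π ω)) inferInstance) A ↔
      ∀ K L, MeasurableSet K → MeasurableSet L → ∀ f g : Z → ℝ,
        IsCondVersion μ (fun ω => σ (π ω)) A f →
        IsCondVersion μ (fun ω => σ (π ω)) (π ⁻¹' (b ⁻¹' K)) g →
        μ.real (A ∩ (π ⁻¹' (b ⁻¹' K) ∩ (fun ω => σ (π ω)) ⁻¹' L))
          = ∫ ω in (fun ω => σ (π ω)) ⁻¹' L, f (σ (π ω)) * g (σ (π ω)) ∂μ := by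
  have hσ : Measurable σ := measurable_iff_comap_le.2 (hσb ▸ le_sup_left)
  have hb : Measurable b := measurable_iff_comap_le.2 (hσb ▸ le_sup_right)
  have hρ : Measurable fun ω => σ (π ω) := hσ.comp hπ
  have hgen : MeasurableSpace.comap π inferInstance = MeasurableSpace.generateFrom
      (preimage (fun ω => (σ (π ω), b (π ω))) ''
        image2 (· ×ˢ ·) {L : Set Z | MeasurableSet L} {K : Set V | MeasurableSet K}) := by
    rw [← MeasurableSpace.comap_generateFrom, generateFrom_prod, ← hσb, MeasurableSpace.comap_sup,
      MeasurableSpace.comap_comp, MeasurableSpace.comap_comp]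
    exact (MeasurableSpace.comap_prodMk _ _).symm
  have hle : MeasurableSpace.comap (fun ω => σ (π ω)) inferInstance
      ≤ MeasurableSpace.comap π inferInstance :=
    (hσ.comp (comap_measurable π)).comap_le
  refine (condExp_ae_eq_condExp_iff_of_isPiSystem hle hπ.comap_le hgen (isPiSystem_prod.comap _)
    ((integrable_const 1).indicator hA)).trans ⟨fun h K L hK hL f g hf hg => ?_, ?_⟩
  · rw [hf.setIntegral_mul hρ hg (hπ (hb hK)) hL, ← setIntegral_indicator_one hA, inter_comm]
    exact (h _ ⟨_, ⟨L, hL, K, hK, rfl⟩, rfl⟩).symm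
  · rintro h _ ⟨_, ⟨L, hL, K, hK, rfl⟩, rfl⟩
    obtain ⟨f, hf⟩ := exists_isCondVersion μ (fun ω => σ (π ω)) A
    obtain ⟨g, hg⟩ := exists_isCondVersion μ (fun ω => σ (π ω)) (π ⁻¹' (b ⁻¹' K))
    have h_fiber := h K L hK hL f g hf hg
    rw [hf.setIntegral_mul hρ hg (hπ (hb hK)) hL, ← setIntegral_indicator_one hA, inter_comm]
      at h_fiber
    exact h_fiber.symm



theorem condProb_comap_ae_eq_iff_forall_fiber_map {X : Type*} [MeasurableSpace X] {ξ : Ω → X}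
    (hξ : Measurable ξ) (hπ : Measurable π)
    (hσb : MeasurableSpace.comap σ inferInstance ⊔ MeasurableSpace.comap b inferInstance
      = ‹MeasurableSpace W›) {J : Set X} (hJ : MeasurableSet J) :
    condProb μ (MeasurableSpace.comap π inferInstance) (ξ ⁻¹' J)
        =ᵐ[μ] condProb μ (MeasurableSpace.comap (fun ω => σ (π ω)) inferInstance) (ξ ⁻¹' J) ↔
      ∀ K L, MeasurableSet K → MeasurableSet L → ∀ f g : Z → ℝ,
        IsCondVersion (μ.map fun ω => (ξ ω, σ (π ω))) Prod.snd {v | v.1 ∈ J} f →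
        IsCondVersion (μ.map π) σ {w | b w ∈ K} g →
        ((μ.map fun ω => (ξ ω, π ω)) {v | v.1 ∈ J ∧ b v.2 ∈ K ∧ σ v.2 ∈ L}).toReal
          = ∫ z in L, f z * g z ∂(μ.map fun ω => σ (π ω)) := by
  have hσ : Measurable σ := measurable_iff_comap_le.2 (hσb ▸ le_sup_left)
  have hb : Measurable b := measurable_iff_comap_le.2 (hσb ▸ le_sup_right)
  have hρ : Measurable fun ω => σ (π ω) := hσ.comp hπ
  rw [condProb_comap_ae_eq_iff_forall_fiber hπ hσb (hξ hJ)]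
  refine forall₄_congr fun K L hK hL => forall₂_congr fun f g => ?_
  refine imp_congr_ctx
    (isCondVersion_map_iff (hξ.prodMk hρ) measurable_snd (measurable_fst hJ)).symm fun hf =>
    imp_congr_ctx (isCondVersion_map_iff hπ hσ (hb hK)).symm fun hg => ?_
  rw [setIntegral_map (f := fun z => f z * g z) hL (hf.1.mul hg.1).aestronglyMeasurable
      hρ.aemeasurable,
    Measure.map_apply (s := {v : X × W | v.1 ∈ J ∧ b v.2 ∈ K ∧ σ v.2 ∈ L}) (hξ.prodMk hπ)
      ((measurable_fst hJ).inter
        (((hb.comp measurable_snd) hK).inter ((hσ.comp measurable_snd) hL)))]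
  rfl

theorem forall_condProb_singleton_ae_eq_iff_forall_fiber_map {X : Type*} [Finite X]
    [MeasurableSpace X] [MeasurableSingletonClass X] {ξ : Ω → X} (hξ : Measurable ξ)
    (hπ : Measurable π)
    (hσb : MeasurableSpace.comap σ inferInstance ⊔ MeasurableSpace.comap b inferInstance
      = ‹MeasurableSpace W›) :
    (∀ x, condProb μ (MeasurableSpace.comap π inferInstance) (ξ ⁻¹' {x})
        =ᵐ[μ] condProb μ (MeasurableSpace.comap (fun ω => σ (π ω)) inferInstance) (ξ ⁻¹' {x})) ↔
      ∀ J K L, MeasurableSet J → MeasurableSet K → MeasurableSet L → ∀ f g : Z → ℝ,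
        IsCondVersion (μ.map fun ω => (ξ ω, σ (π ω))) Prod.snd {v | v.1 ∈ J} f →
        IsCondVersion (μ.map π) σ {w | b w ∈ K} g →
        ((μ.map fun ω => (ξ ω, π ω)) {v | v.1 ∈ J ∧ b v.2 ∈ K ∧ σ v.2 ∈ L}).toReal
          = ∫ z in L, f z * g z ∂(μ.map fun ω => σ (π ω)) := by
  refine ⟨fun h J K L hJ => ?_, fun h x => ?_⟩
  · exact (condProb_comap_ae_eq_iff_forall_fiber_map hξ hπ hσb hJ).1
      (condProb_preimage_ae_eq_of_forall_singleton hξ h J) K L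
  · exact (condProb_comap_ae_eq_iff_forall_fiber_map hξ hπ hσb (measurableSet_singleton x)).2
      (h {x} · · (measurableSet_singleton x))

end FiberProduct

/-- **Corollary.**  An h.v. model `p` satisfies parameter independence if and only if
`p_a = q_a ⊗_{Ya×Λ} r` and `p_b = q_b ⊗_{Yb×Λ} r`, where `p_a, p_b, q_a, q_b, r` are the
marginals of `p` on `Xa × Y × Λ`, `Xb × Y × Λ`, `Xa × Ya × Λ`, `Xb × Yb × Λ`, `Y × Λ`. -/
theorem parameterIndependence_iff_fiberProducts
    {Xa Xb Ya Yb Λ : Type*}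
    [Fintype Xa] [MeasurableSpace Xa] [DiscreteMeasurableSpace Xa]
    [Fintype Xb] [MeasurableSpace Xb] [DiscreteMeasurableSpace Xb]
    [MeasurableSpace Ya] [MeasurableSpace Yb] [MeasurableSpace Λ]
    (p : Measure ((Xa × Xb) × (Ya × Yb) × Λ)) [IsProbabilityMeasure p] :
    ParameterIndependence p ↔ ParamFiberA p ∧ ParamFiberB p := by
  have hσbA : MeasurableSpace.comap (fun w : (Ya × Yb) × Λ => (w.1.1, w.2)) inferInstance
      ⊔ MeasurableSpace.comap (fun w : (Ya × Yb) × Λ => w.1.2) inferInstance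
      = (inferInstance : MeasurableSpace ((Ya × Yb) × Λ)) := by
    simp_rw [Prod.instMeasurableSpace, MeasurableSpace.prod, MeasurableSpace.comap_sup,
      MeasurableSpace.comap_comp]
    ac_rfl
  have hσbB : MeasurableSpace.comap (fun w : (Ya × Yb) × Λ => (w.1.2, w.2)) inferInstance
      ⊔ MeasurableSpace.comap (fun w : (Ya × Yb) × Λ => w.1.1) inferInstance
      = (inferInstance : MeasurableSpace ((Ya × Yb) × Λ)) := by
    simp_rw [Prod.instMeasurableSpace, MeasurableSpace.prod, MeasurableSpace.comap_sup,
      MeasurableSpace.comap_comp]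
    ac_rfl
  exact and_congr
    (forall_condProb_singleton_ae_eq_iff_forall_fiber_map (measurable_fst.comp measurable_fst)
      measurable_snd hσbA)
    (forall_condProb_singleton_ae_eq_iff_forall_fiber_map (measurable_snd.comp measurable_fst)
      measurable_snd hσbB)
end

section
/- An h.v. model p satisfies locality if and only if it satisfies both parameter independence and outcome independence. -/
/-!
Summing the locality factorisation `p[(x_a, x_b)‖𝒴⊗ℒ] = p[x_a‖𝒴_a⊗ℒ] ⬝ p[x_b‖𝒴_b⊗ℒ]` over the
finitely many `x_b`, and using `∑ p[x_b‖𝒴_b⊗ℒ] = 1`, gives `p[x_a‖𝒴⊗ℒ] = p[x_a‖𝒴_a⊗ℒ]`: locality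
implies parameter independence. Under parameter independence the right-hand sides of locality and
of outcome independence agree almost surely, so the two conditions coincide.
-/

open MeasureTheory Set

section CondProb

variable {α ι : Type*} {m m' m0 : MeasurableSpace α} {p : Measure[m0] α} [IsFiniteMeasure p]
  [Fintype ι] [MeasurableSpace ι] [MeasurableSingletonClass ι] {g : α → ι}

theorem condProb_ae_eq_sum_inter_fiber (hg : Measurable g) {S : Set α} (hS : MeasurableSet S) :
    condProb p m S =ᵐ[p] ∑ j, condProb p m (S ∩ g ⁻¹' {j}) := by
  have hsplit : S.indicator (fun _ => (1 : ℝ)) = ∑ j, (S ∩ g ⁻¹' {j}).indicator fun _ => 1 := by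
    classical
    ext a
    simp only [Finset.sum_apply, indicator_apply, mem_inter_iff, mem_preimage, mem_singleton_iff]
    by_cases ha : a ∈ S <;> simp [ha]
  unfold condProb
  rw [hsplit]
  exact condExp_finsetSum (fun j _ =>
    (integrable_const (1 : ℝ)).indicator (hS.inter (hg (measurableSet_singleton j)))) m

theorem sum_condProb_fiber_ae_eq_one (hm : m ≤ m0) (hg : Measurable g) :
    ∑ j, condProb p m (g ⁻¹' {j}) =ᵐ[p] 1 := by
  have hone : condProb p m univ = 1 := by
    rw [condProb, indicator_univ]
    exact condExp_const hm 1
  simpa [hone] using (condProb_ae_eq_sum_inter_fiber (p := p) (m := m) hg MeasurableSet.univ).symm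

theorem condProb_ae_eq_of_fiber_factorization (hm' : m' ≤ m0) (hg : Measurable g) {S : Set α}
    (hS : MeasurableSet S) {u : α → ℝ}
    (h : ∀ j, condProb p m (S ∩ g ⁻¹' {j}) =ᵐ[p] u * condProb p m' (g ⁻¹' {j})) :
    condProb p m S =ᵐ[p] u := by
  filter_upwards [condProb_ae_eq_sum_inter_fiber hg hS, ae_all_iff.2 h,
    sum_condProb_fiber_ae_eq_one hm' hg] with a hsum hfac hone
  simp only [Finset.sum_apply, Pi.mul_apply, Pi.one_apply] at hsum hfac hone
  rw [hsum, Finset.sum_congr rfl fun j _ => hfac j, ← Finset.mul_sum, hone, mul_one]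

end CondProb

section HiddenVariable

variable {Xa Xb Ya Yb Λ : Type*} [MeasurableSpace Xa] [MeasurableSpace Xb]
  [MeasurableSpace Ya] [MeasurableSpace Yb] [MeasurableSpace Λ]
  {p : Measure ((Xa × Xb) × (Ya × Yb) × Λ)}

theorem ParameterIndependence.locality_iff_outcomeIndependence (hPI : ParameterIndependence p) :
    Locality p ↔ OutcomeIndependence p := by
  refine forall_congr' fun x => ?_
  have hfactors : (fun ω => condProb p mYaL {ω' | ω'.1.1 = x.1} ω *
        condProb p mYbL {ω' | ω'.1.2 = x.2} ω) =ᵐ[p]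
      fun ω => condProb p mYL {ω' | ω'.1.1 = x.1} ω * condProb p mYL {ω' | ω'.1.2 = x.2} ω := by
    filter_upwards [hPI.1 x.1, hPI.2 x.2] with ω ha hb
    rw [ha, hb]
  exact ⟨fun h => h.trans hfactors, fun h => h.trans hfactors.symm⟩

theorem mYaL_le : mYaL ≤ (inferInstance : MeasurableSpace ((Xa × Xb) × (Ya × Yb) × Λ)) :=
  Measurable.comap_le (by fun_prop)

theorem mYbL_le : mYbL ≤ (inferInstance : MeasurableSpace ((Xa × Xb) × (Ya × Yb) × Λ)) :=
  Measurable.comap_le (by fun_prop)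

variable [Fintype Xa] [DiscreteMeasurableSpace Xa] [Fintype Xb] [DiscreteMeasurableSpace Xb]
  [IsFiniteMeasure p]

theorem Locality.parameterIndependence (hloc : Locality p) : ParameterIndependence p := by
  constructor
  · intro xa
    refine condProb_ae_eq_of_fiber_factorization mYbL_le measurable_fst.snd
      (measurable_fst.fst (measurableSet_singleton xa)) fun xb => ?_
    convert hloc (xa, xb) using 2
    · ext ω
      simp [Prod.ext_iff]
    · rfl
  · intro xb
    refine condProb_ae_eq_of_fiber_factorization mYaL_le measurable_fst.fst
      (measurable_fst.snd (measurableSet_singleton xb)) fun xa => ?_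
    rw [mul_comm]
    convert hloc (xa, xb) using 2
    · ext ω
      simp [Prod.ext_iff, and_comm]
    · rfl

end HiddenVariable

/-- **Proposition (Jarrett).**  An h.v. model `p` satisfies locality if and only if it satisfies
both parameter independence and outcome independence. -/
theorem locality_iff_parameter_and_outcome
    {Xa Xb Ya Yb Λ : Type*}
    [Fintype Xa] [MeasurableSpace Xa] [DiscreteMeasurableSpace Xa]
    [Fintype Xb] [MeasurableSpace Xb] [DiscreteMeasurableSpace Xb]
    [MeasurableSpace Ya] [MeasurableSpace Yb] [MeasurableSpace Λ]
    (p : Measure ((Xa × Xb) × (Ya × Yb) × Λ)) [IsProbabilityMeasure p] :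
    Locality p ↔ ParameterIndependence p ∧ OutcomeIndependence p :=
  ⟨fun hloc => ⟨hloc.parameterIndependence,
      hloc.parameterIndependence.locality_iff_outcomeIndependence.1 hloc⟩,
    fun ⟨hPI, hOI⟩ => hPI.locality_iff_outcomeIndependence.2 hOI⟩
end

section
/- If an h.v. model p satisfies strong determinism, then it satisfies weak determinism. -/
open MeasureTheory Set

/-! A conditional probability `p[S‖m]` is a.s. `{0,1}`-valued exactly when the indicator of `S`
is a.s. equal to an `m`-measurable function, and then `p[S‖m] = 1_S` a.s.: integrating over
`{p[S‖m] = 1}` and its complement shows that `S` is a.s. equal to that `m`-measurable event.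
Strong determinism thus makes `1_{x_a}` and `1_{x_b}` a.e. measurable for `𝒴a⊗ℒ` and `𝒴b⊗ℒ`,
both coarser than `𝒴⊗ℒ`, so their product `1_x` is a.e. `𝒴⊗ℒ`-measurable: this is weak
determinism. -/

section CondProb

variable {α : Type*} {m m₀ : MeasurableSpace α} {μ : Measure α} [IsFiniteMeasure μ] {s t : Set α}

theorem ae_eq_set_of_condProb_ae_eq_indicator (hm : m ≤ m₀) (hs : MeasurableSet s)
    (ht : MeasurableSet[m] t) (h : condProb μ m s =ᵐ[μ] t.indicator fun _ => 1) : s =ᵐ[μ] t := by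
  have hinter : ∀ B, MeasurableSet[m] B → μ.real (s ∩ B) = μ.real (t ∩ B) := by
    intro B hB
    calc μ.real (s ∩ B) = ∫ ω in B, s.indicator (fun _ => (1 : ℝ)) ω ∂μ := by
          rw [setIntegral_indicator hs, Set.inter_comm]; simp
      _ = ∫ ω in B, condProb μ m s ω ∂μ :=
          (setIntegral_condExp hm ((integrable_const 1).indicator hs) hB).symm
      _ = ∫ ω in B, t.indicator (fun _ => (1 : ℝ)) ω ∂μ :=
          setIntegral_congr_ae (hm B hB) (h.mono fun _ h _ => h)
      _ = μ.real (t ∩ B) := by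
          rw [setIntegral_indicator (hm t ht), Set.inter_comm]; simp
  refine ae_eq_set.2
    ⟨(measureReal_eq_zero_iff (by finiteness)).1 ?_, (measureReal_eq_zero_iff (by finiteness)).1 ?_⟩
  · simpa [Set.sdiff_eq] using hinter tᶜ ht.compl
  · have hsplit := measureReal_sdiff_add_inter (μ := μ) (s := t) hs
    rw [Set.inter_comm, hinter t ht, Set.inter_self] at hsplit
    linarith

theorem indicator_ae_eq_condProb_of_ae_mem_zero_one (hm : m ≤ m₀) (hs : MeasurableSet s)
    (h01 : ∀ᵐ ω ∂μ, condProb μ m s ω ∈ ({0, 1} : Set ℝ)) :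
    s.indicator (fun _ => 1) =ᵐ[μ] condProb μ m s := by
  set t := condProb μ m s ⁻¹' {1}
  have ht : MeasurableSet[m] t := stronglyMeasurable_condExp.measurable (measurableSet_singleton 1)
  have hcond : condProb μ m s =ᵐ[μ] t.indicator fun _ => 1 := by
    filter_upwards [h01] with ω hω
    rcases hω with h0 | h1
    · simp [t, h0]
    · simp [t, Set.mem_singleton_iff.1 h1]
  exact (indicator_ae_eq_of_ae_eq_set (ae_eq_set_of_condProb_ae_eq_indicator hm hs ht hcond)).trans
    hcond.symm

theorem ae_mem_zero_one_condProb_iff_aestronglyMeasurable (hm : m ≤ m₀) (hs : MeasurableSet s) :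
    (∀ᵐ ω ∂μ, condProb μ m s ω ∈ ({0, 1} : Set ℝ)) ↔
      AEStronglyMeasurable[m] (s.indicator fun _ => (1 : ℝ)) μ := by
  refine ⟨fun h01 => stronglyMeasurable_condExp.aestronglyMeasurable.congr
    (indicator_ae_eq_condProb_of_ae_mem_zero_one hm hs h01).symm, fun hmeas => ?_⟩
  filter_upwards [condExp_of_aestronglyMeasurable' hm hmeas ((integrable_const 1).indicator hs)]
    with ω hω
  rw [condProb, hω]
  by_cases hωs : ω ∈ s <;> simp [hωs]

end CondProb

section HiddenVariable

variable {Xa Xb Ya Yb Λ : Type*} [MeasurableSpace Ya] [MeasurableSpace Yb] [MeasurableSpace Λ]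

theorem mYL_le [MeasurableSpace Xa] [MeasurableSpace Xb] :
    (mYL : MeasurableSpace ((Xa × Xb) × (Ya × Yb) × Λ)) ≤ (inferInstance : MeasurableSpace _) :=
  measurable_snd.comap_le

theorem mYaL_le_mYL : (mYaL : MeasurableSpace ((Xa × Xb) × (Ya × Yb) × Λ)) ≤ mYL :=
  ((measurable_fst.fst.prodMk measurable_snd).comp (comap_measurable Prod.snd)).comap_le

theorem mYbL_le_mYL : (mYbL : MeasurableSpace ((Xa × Xb) × (Ya × Yb) × Λ)) ≤ mYL :=
  ((measurable_fst.snd.prodMk measurable_snd).comp (comap_measurable Prod.snd)).comap_le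

end HiddenVariable

theorem weakDeterminism_of_strongDeterminism_general
    {Xa Xb Ya Yb Λ : Type*}
    [MeasurableSpace Xa] [DiscreteMeasurableSpace Xa]
    [MeasurableSpace Xb] [DiscreteMeasurableSpace Xb]
    [MeasurableSpace Ya] [MeasurableSpace Yb] [MeasurableSpace Λ]
    (p : Measure ((Xa × Xb) × (Ya × Yb) × Λ)) [IsProbabilityMeasure p]
    (h : StrongDeterminism p) : WeakDeterminism p := by
  intro x
  set Sa : Set ((Xa × Xb) × (Ya × Yb) × Λ) := {ω | ω.1.1 = x.1}
  set Sb : Set ((Xa × Xb) × (Ya × Yb) × Λ) := {ω | ω.1.2 = x.2}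
  have hSa : MeasurableSet Sa := measurable_fst.fst (measurableSet_singleton x.1)
  have hSb : MeasurableSet Sb := measurable_fst.snd (measurableSet_singleton x.2)
  have hSx : {ω : (Xa × Xb) × (Ya × Yb) × Λ | ω.1 = x} = Sa ∩ Sb :=
    Set.ext fun _ => Prod.ext_iff
  have ha := (ae_mem_zero_one_condProb_iff_aestronglyMeasurable
    (mYaL_le_mYL.trans mYL_le) hSa).1 (h.1 x.1)
  have hb := (ae_mem_zero_one_condProb_iff_aestronglyMeasurable
    (mYbL_le_mYL.trans mYL_le) hSb).1 (h.2 x.2)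
  rw [hSx, ae_mem_zero_one_condProb_iff_aestronglyMeasurable mYL_le (hSa.inter hSb),
    ← Pi.one_def, Set.inter_indicator_one]
  exact (ha.mono mYaL_le_mYL).mul (hb.mono mYbL_le_mYL)

/-- **Proposition.**  If an h.v. model `p` satisfies strong determinism, then it satisfies weak
determinism. -/
theorem weakDeterminism_of_strongDeterminism
    {Xa Xb Ya Yb Λ : Type*}
    [Fintype Xa] [MeasurableSpace Xa] [DiscreteMeasurableSpace Xa]
    [Fintype Xb] [MeasurableSpace Xb] [DiscreteMeasurableSpace Xb]
    [MeasurableSpace Ya] [MeasurableSpace Yb] [MeasurableSpace Λ]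
    (p : Measure ((Xa × Xb) × (Ya × Yb) × Λ)) [IsProbabilityMeasure p]
    (h : StrongDeterminism p) : WeakDeterminism p :=
  weakDeterminism_of_strongDeterminism_general p h
end

section
/- If an h.v. model p satisfies weak determinism, then it satisfies outcome independence. -/
open MeasureTheory Set

/-! Given the measurements and the hidden variable, the conditional probabilities of the finitely
many joint outcomes sum to one, so under weak determinism exactly one of them is `1`: the joint
outcome is a.s. a point mass. The marginal conditional probabilities of `x_a` and `x_b` are the
row and column sums, and a point mass on a product is the product of its marginals. -/

open Function

section CondProb

-- `m` precedes the ambient instance so that instance search finds the latter.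
variable {α : Type*} {m : MeasurableSpace α} [MeasurableSpace α] {p : Measure α}
  [IsFiniteMeasure p]

lemma condProb_iUnion_ae_eq_sum {ι : Type*} [Fintype ι] {S : ι → Set α}
    (hS : ∀ i, MeasurableSet (S i)) (hdisj : Pairwise (Disjoint on S)) :
    condProb p m (⋃ i, S i) =ᵐ[p] ∑ i, condProb p m (S i) := by
  have hind :=
    Finset.indicator_biUnion Finset.univ S (hdisj.set_pairwise _) (f := fun _ => (1 : ℝ))
  simp only [Finset.mem_univ, iUnion_true] at hind
  rw [condProb, hind, ← Finset.sum_fn]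
  exact condExp_finsetSum (fun i _ => (integrable_const 1).indicator (hS i)) m

lemma condProb_univ (hm : m ≤ ‹MeasurableSpace α›) : condProb p m univ = 1 := by
  rw [condProb, indicator_univ]
  exact condExp_const hm 1

end CondProb

lemma exists_eq_pi_single_of_sum_eq_one {ι : Type*} [Fintype ι] [DecidableEq ι] {c : ι → ℝ}
    (h01 : ∀ i, c i ∈ ({0, 1} : Set ℝ)) (hsum : ∑ i, c i = 1) : ∃ i₀, c = Pi.single i₀ 1 := by
  simp only [mem_insert_iff, mem_singleton_iff] at h01
  obtain ⟨i₀, hi₀⟩ : ∃ i₀, c i₀ = 1 := by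
    by_contra! hne
    have : ∀ i, c i = 0 := fun i => (h01 i).resolve_right (hne i)
    simp [this] at hsum
  refine ⟨i₀, funext fun j => ?_⟩
  rcases eq_or_ne j i₀ with rfl | hj
  · simp [hi₀]
  · have hnonneg : ∀ i ∈ Finset.univ, 0 ≤ c i := fun i _ => by
      rcases h01 i with h | h <;> simp [h]
    have := Finset.add_le_sum hnonneg (Finset.mem_univ i₀) (Finset.mem_univ j) hj.symm
    rcases h01 j with h | h
    · simpa [hj] using h
    · linarith

lemma eq_sum_mul_sum_of_mem_zero_one {α β : Type*} [Fintype α] [Fintype β] {c : α × β → ℝ}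
    (h01 : ∀ z, c z ∈ ({0, 1} : Set ℝ)) (hsum : ∑ z, c z = 1) (x : α × β) :
    c x = (∑ b, c (x.1, b)) * ∑ a, c (a, x.2) := by
  classical
  obtain ⟨z₀, rfl⟩ := exists_eq_pi_single_of_sum_eq_one h01 hsum
  simp only [Pi.single_apply, Prod.ext_iff]
  by_cases h1 : x.1 = z₀.1 <;> by_cases h2 : x.2 = z₀.2 <;> simp [h1, h2]

/-- **Proposition.**  If an h.v. model `p` satisfies weak determinism, then it satisfies outcome
independence. -/
theorem outcomeIndependence_of_weakDeterminism
    {Xa Xb Ya Yb Λ : Type*}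
    [Fintype Xa] [MeasurableSpace Xa] [DiscreteMeasurableSpace Xa]
    [Fintype Xb] [MeasurableSpace Xb] [DiscreteMeasurableSpace Xb]
    [MeasurableSpace Ya] [MeasurableSpace Yb] [MeasurableSpace Λ]
    (p : Measure ((Xa × Xb) × (Ya × Yb) × Λ)) [IsProbabilityMeasure p]
    (h : WeakDeterminism p) : OutcomeIndependence p := by
  intro x
  set E : Xa × Xb → Set ((Xa × Xb) × (Ya × Yb) × Λ) := fun z => Prod.fst ⁻¹' {z}
  have hE : ∀ z, MeasurableSet (E z) := fun z => measurable_fst (measurableSet_singleton z)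
  have hdisj : Pairwise (Disjoint on E) := pairwise_disjoint_fiber Prod.fst
  have hAlice : condProb p mYL {ω | ω.1.1 = x.1} =ᵐ[p] ∑ b, condProb p mYL (E (x.1, b)) := by
    rw [show {ω | ω.1.1 = x.1} = ⋃ b, E (x.1, b) by ext; simp [E, Prod.ext_iff]]
    exact condProb_iUnion_ae_eq_sum (fun b => hE _)
      (hdisj.comp_of_injective (Prod.mk_right_injective x.1))
  have hBob : condProb p mYL {ω | ω.1.2 = x.2} =ᵐ[p] ∑ a, condProb p mYL (E (a, x.2)) := by
    rw [show {ω | ω.1.2 = x.2} = ⋃ a, E (a, x.2) by ext; simp [E, Prod.ext_iff]]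
    exact condProb_iUnion_ae_eq_sum (fun a => hE _)
      (hdisj.comp_of_injective (Prod.mk_left_injective x.2))
  have hTotal : ∑ z, condProb p mYL (E z) =ᵐ[p] 1 := by
    rw [← condProb_univ (p := p) measurable_snd.comap_le,
      show univ = ⋃ z, E z by ext; simp [E]]
    exact (condProb_iUnion_ae_eq_sum hE hdisj).symm
  filter_upwards [hAlice, hBob, hTotal, ae_all_iff.2 h] with ω hω_a hω_b hω_tot hω_det
  rw [hω_a, hω_b]
  simp only [Finset.sum_apply] at hω_tot ⊢
  exact eq_sum_mul_sum_of_mem_zero_one hω_det hω_tot x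
end

section
/- Every empirical model e can be realized by an h.v. model p such that p satisfies strong determinism and the hidden-variable space of p is finite. (Concretely, one may take Λ to be a copy of the finite set X = X_a × X_b with its power set as σ-algebra, let d be the 'diagonal' measure on X × Λ with d(x,x') = marg_X e({x}) if x = x' and 0 otherwise, and take p to be the fiber product d ⊗_X e over X; this p realizes e and satisfies strong determinism.) -/
open MeasureTheory Set

/-!
Let the hidden variable, ranging over a copy of the finite set `X`, record the outcome. Then,
almost surely, Alice's outcome is a measurable function of the hidden variable alone, so the
event `{x_a}` coincides a.s. with an event of `𝒴a ⊗ ℒ`; its conditional probability given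
`𝒴a ⊗ ℒ` is therefore an indicator function, with values in `{0, 1}`. The same holds for Bob,
and forgetting the hidden variable gives back `e`.
-/

theorem condProb_ae_eq_indicator_of_ae_eq {α : Type*} {m mα : MeasurableSpace α}
    {p : Measure[mα] α} [IsFiniteMeasure p] (hm : m ≤ mα) {S T : Set α}
    (hT : MeasurableSet[m] T) (hST : S =ᵐ[p] T) :
    condProb p m S =ᵐ[p] T.indicator fun _ => 1 := by
  refine (condExp_congr_ae (indicator_ae_eq_of_ae_eq_set hST)).trans ?_
  rw [condExp_of_stronglyMeasurable hm (stronglyMeasurable_const.indicator hT)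
    ((integrable_const 1).indicator (hm _ hT))]

theorem ae_condProb_comap_mem_zero_one {α Z : Type*} [MeasurableSpace α] [MeasurableSpace Z]
    {p : Measure α} [IsFiniteMeasure p] {π : α → Z} (hπ : Measurable π) {S : Set α} {T : Set Z}
    (hT : MeasurableSet T) (hST : S =ᵐ[p] π ⁻¹' T) :
    ∀ᵐ a ∂p, condProb p (MeasurableSpace.comap π inferInstance) S a ∈ ({0, 1} : Set ℝ) := by
  filter_upwards [condProb_ae_eq_indicator_of_ae_eq hπ.comap_le ⟨T, hT, rfl⟩ hST] with a ha
  rw [ha]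
  by_cases h : a ∈ π ⁻¹' T <;> simp [h]

section OutcomeRecording

variable {X Y Λ : Type*} [MeasurableSpace X] [MeasurableSpace Y] [MeasurableSpace Λ]
  {c : X → Λ}

/-- The paper's fiber product `d ⊗_X e` of `e` with the diagonal measure `d`, written as the
push-forward of `e` under `(x, y) ↦ (x, y, c x)`: the hidden variable records the outcome. -/
noncomputable def outcomeRecordingModel (c : X → Λ) (e : Measure (X × Y)) : Measure (X × Y × Λ) :=
  e.map fun z => (z.1, z.2, c z.1)

theorem measurable_outcomeRecording (hc : Measurable c) :
    Measurable fun z : X × Y => (z.1, z.2, c z.1) := by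
  fun_prop

theorem isProbabilityMeasure_outcomeRecordingModel (hc : Measurable c) (e : Measure (X × Y))
    [IsProbabilityMeasure e] : IsProbabilityMeasure (outcomeRecordingModel c e) :=
  Measure.isProbabilityMeasure_map (measurable_outcomeRecording hc).aemeasurable

theorem map_outcomeRecordingModel (hc : Measurable c) (e : Measure (X × Y)) :
    (outcomeRecordingModel c e).map (fun ω => (ω.1, ω.2.1)) = e := by
  rw [outcomeRecordingModel, Measure.map_map (by fun_prop) (measurable_outcomeRecording hc)]
  exact Measure.map_id

theorem ae_outcomeRecordingModel_outcome_eq [MeasurableEq X] (hc : Measurable c)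
    {g : Λ → X} (hg : Measurable g) (hgc : Function.LeftInverse g c) (e : Measure (X × Y)) :
    ∀ᵐ ω ∂outcomeRecordingModel c e, ω.1 = g ω.2.2 := by
  have hg' : Measurable fun ω : X × Y × Λ => g ω.2.2 := by fun_prop
  rw [outcomeRecordingModel, ae_map_iff (measurable_outcomeRecording hc).aemeasurable
    (measurableSet_eq_fun measurable_fst hg')]
  exact .of_forall fun z => (hgc z.1).symm

end OutcomeRecording

section HiddenVariable

variable {Xa Xb Ya Yb Λ : Type*}
  [Fintype Xa] [MeasurableSpace Xa] [DiscreteMeasurableSpace Xa]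
  [Fintype Xb] [MeasurableSpace Xb] [DiscreteMeasurableSpace Xb]
  [MeasurableSpace Ya] [MeasurableSpace Yb] [MeasurableSpace Λ]

theorem strongDeterminism_of_ae_outcome_eq {p : Measure ((Xa × Xb) × (Ya × Yb) × Λ)}
    [IsFiniteMeasure p] {g : Λ → Xa × Xb} (hg : Measurable g)
    (hpg : ∀ᵐ ω ∂p, ω.1 = g ω.2.2) : StrongDeterminism p := by
  constructor
  · intro xa
    refine ae_condProb_comap_mem_zero_one
      (π := fun ω : (Xa × Xb) × (Ya × Yb) × Λ => (ω.2.1.1, ω.2.2)) (by fun_prop)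
      (T := {q | (g q.2).1 = xa}) ((hg.fst.comp measurable_snd) (measurableSet_singleton xa)) ?_
    filter_upwards [hpg] with ω hω
    exact congrArg (·.1 = xa) hω
  · intro xb
    refine ae_condProb_comap_mem_zero_one
      (π := fun ω : (Xa × Xb) × (Ya × Yb) × Λ => (ω.2.1.2, ω.2.2)) (by fun_prop)
      (T := {q | (g q.2).2 = xb}) ((hg.snd.comp measurable_snd) (measurableSet_singleton xb)) ?_
    filter_upwards [hpg] with ω hω
    exact congrArg (·.2 = xb) hω

end HiddenVariable

/-- **Theorem (first determinization result).**  Every empirical model `e` can be realized by an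
h.v. model `p` that satisfies strong determinism and whose hidden-variable space is finite. -/
theorem exists_stronglyDeterministic_finite_realization
    {Xa Xb Ya Yb : Type*}
    [Fintype Xa] [MeasurableSpace Xa] [DiscreteMeasurableSpace Xa]
    [Fintype Xb] [MeasurableSpace Xb] [DiscreteMeasurableSpace Xb]
    [MeasurableSpace Ya] [MeasurableSpace Yb]
    (e : Measure ((Xa × Xb) × (Ya × Yb))) [IsProbabilityMeasure e] :
    ∃ (Λ : Type) (_ : MeasurableSpace Λ) (_ : Finite Λ)
      (p : Measure ((Xa × Xb) × (Ya × Yb) × Λ)),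
        IsProbabilityMeasure p ∧
        p.map (fun ω => (ω.1, ω.2.1)) = e ∧
        StrongDeterminism p := by
  let ι := Fintype.equivFin (Xa × Xb)
  have hι : Measurable ι := .of_discrete
  have hp := isProbabilityMeasure_outcomeRecordingModel hι e
  exact ⟨_, inferInstance, inferInstance, outcomeRecordingModel ι e, hp,
    map_outcomeRecordingModel hι e,
    strongDeterminism_of_ae_outcome_eq .of_discrete
      (ae_outcomeRecordingModel_outcome_eq hι .of_discrete ι.left_inv e)⟩
end
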